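/- Consider a finite recurrent MDP on S that is skip-free in the negative direction on the tree. For g ∈ ℝ and h : S → ℝ with h_0 = 0, set x = g and y_i = h_i − h_{ρ(i)} for i ≠ 0. Then (g, h) satisfies the average cost optimality equations if and only if (x, y) satisfies the skip-free optimality equations: y_i = min_{a∈A} (c_i(a) − x + ∑_{k∈D(i)} p̄_{ik}(a) y_k)/p_{iρ(i)}(a) for every i ≠ 0 (the sum being empty when D(i) = ∅), and 0 = min_{a∈A} { c_0(a) − x + ∑_{k∈D(0)} p̄_{0k}(a) y_k }. Moreover, for each state i an action a attains the minimum in the average cost optimality equation at i if and only if it attains the minimum in the corresponding skip-free equation. -/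
import Mathlib


open Finset Filter

noncomputable section

/-- A rooted tree structure on a state space `S`: a root, a parent map fixing the root,
such that iterating the parent map from any state reaches the root. -/
structure SFTree (S : Type*) where
  root : S
  parent : S → S
  parent_root : parent root = root
  reaches_root : ∀ i : S, ∃ n : ℕ, parent^[n] i = root

namespace SFTree

variable {S : Type*} [Fintype S] [DecidableEq S]

open Classical in
/-- The set of descendants of `i`: states `j ≠ i` whose path to the root passes through `i`. -/
def desc (T : SFTree S) (i : S) : Finset S :=
  Finset.univ.filter fun j => j ≠ i ∧ ∃ n : ℕ, T.parent^[n] j = i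

open Classical in
/-- The subtree rooted at `i`: `i` together with its descendants. -/
def subtree (T : SFTree S) (i : S) : Finset S :=
  Finset.univ.filter fun j => ∃ n : ℕ, T.parent^[n] j = i

open Classical in
/-- The states strictly after `i` on the path from `i` to `j`. -/
def delta (T : SFTree S) (i j : S) : Finset S :=
  Finset.univ.filter fun r =>
    r ≠ i ∧ (∃ n : ℕ, T.parent^[n] j = r) ∧ (∃ m : ℕ, T.parent^[m] r = i)

end SFTree

/-- A finite Markov decision process: costs and transition probabilities. -/
structure MDP (S A : Type*) [Fintype S] where
  c : S → A → ℝ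
  p : S → A → S → ℝ
  p_nonneg : ∀ i a j, 0 ≤ p i a j
  p_sum_one : ∀ i a, ∑ j, p i a j = 1

namespace MDP

variable {S A : Type*} [Fintype S] [DecidableEq S]

/-- Tail probability: the probability of jumping from `i` into the subtree rooted at `k`. -/
def ptail (M : MDP S A) (T : SFTree S) (i : S) (a : A) (k : S) : ℝ :=
  ∑ s ∈ T.subtree k, M.p i a s

/-- Skip-free in the negative direction on the tree `T`: from `i ≠ root` the only possible
transitions are to the parent of `i` or into the subtree rooted at `i`. -/
def IsSkipFree (M : MDP S A) (T : SFTree S) : Prop :=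
  ∀ i, i ≠ T.root → ∀ a j, M.p i a j ≠ 0 → j = T.parent i ∨ j ∈ T.subtree i

/-- Transition matrix of the stationary deterministic policy `d`. -/
def Pmat (M : MDP S A) (d : S → A) : Matrix S S ℝ :=
  Matrix.of fun i j => M.p i (d i) j

/-- Cost vector of the stationary deterministic policy `d`. -/
def cvec (M : MDP S A) (d : S → A) : S → ℝ := fun i => M.c i (d i)

/-- Expected average cost of the stationary deterministic policy `d` starting from `i`. -/
def avgCost (M : MDP S A) (d : S → A) (i : S) : ℝ :=
  Filter.limsup
    (fun n : ℕ => (n : ℝ)⁻¹ * ∑ t ∈ Finset.range n, ((M.Pmat d ^ t).mulVec (M.cvec d)) i)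
    Filter.atTop

end MDP

/-- A (substochastic) matrix is irreducible if every state can reach every other state
in a positive number of steps. -/
def MatIrreducible {S : Type*} [Fintype S] [DecidableEq S] (P : Matrix S S ℝ) : Prop :=
  ∀ i j, ∃ n : ℕ, 0 < n ∧ 0 < (P ^ n) i j

/-- A recurrent model: every stationary deterministic policy has an irreducible
transition matrix. -/
def IsRecurrentModel {S A : Type*} [Fintype S] [DecidableEq S] (M : MDP S A) : Prop :=
  ∀ d : S → A, MatIrreducible (M.Pmat d)

/-- The probability weight of a path of length `n`. -/
def pathWt {S : Type*} [Fintype S] (P : Matrix S S ℝ) {n : ℕ} (x : Fin (n + 1) → S) : ℝ :=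
  ∏ t : Fin n, P (x t.castSucc) (x t.succ)

open Classical in
/-- `E[f(X_n); τ > n]` for the chain with matrix `P` started at `z`, where `τ` is the
first-return epoch to `z` (the first time the chain enters `z` from a state `≠ z`). -/
def retTerm {S : Type*} [Fintype S] (P : Matrix S S ℝ) (z : S) (f : S → ℝ) (n : ℕ) : ℝ :=
  ∑ x ∈ Finset.univ.filter
      (fun (x : Fin (n + 1) → S) =>
        x 0 = z ∧ ∀ t : Fin n, ¬(x t.castSucc ≠ z ∧ x t.succ = z)),
    pathWt P x * f (x (Fin.last n))

/-- `E[∑_{t=0}^{τ-1} f(X_t)]` for the chain with matrix `P` started at `z`, where `τ` is the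
first-return epoch to `z`. -/
def retSum {S : Type*} [Fintype S] (P : Matrix S S ℝ) (z : S) (f : S → ℝ) : ℝ :=
  ∑' n : ℕ, retTerm P z f n

open Classical in
/-- `E[f(X_n); σ > n]` for the chain with matrix `P` started at `i`, where `σ` is the
first-passage epoch to `z`, `σ = min {t > 0 : X_t = z}`. -/
def passTerm {S : Type*} [Fintype S] (P : Matrix S S ℝ) (i z : S) (f : S → ℝ) (n : ℕ) : ℝ :=
  ∑ x ∈ Finset.univ.filter
      (fun (x : Fin (n + 1) → S) => x 0 = i ∧ ∀ t : Fin n, x t.succ ≠ z),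
    pathWt P x * f (x (Fin.last n))

/-- `E[∑_{t=0}^{σ-1} f(X_t)]` for the chain with matrix `P` started at `i`, where `σ` is the
first-passage epoch to `z`. -/
def passSum {S : Type*} [Fintype S] (P : Matrix S S ℝ) (i z : S) (f : S → ℝ) : ℝ :=
  ∑' n : ℕ, passTerm P i z f n

end


section Aux

variable {S : Type*} [Fintype S] [DecidableEq S]

namespace SFTree

variable (T : SFTree S)

lemma iterate_root (n : ℕ) : T.parent^[n] T.root = T.root := by
  induction n with
  | zero => rfl
  | succ n ih => rw [Function.iterate_succ_apply', ih, T.parent_root]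

lemma mem_subtree' {i j : S} : j ∈ T.subtree i ↔ ∃ n, T.parent^[n] j = i := by
  simp [subtree]

lemma mem_desc' {i j : S} : j ∈ T.desc i ↔ j ≠ i ∧ ∃ n, T.parent^[n] j = i := by
  simp [desc]

lemma mem_delta' {i j r : S} :
    r ∈ T.delta i j ↔ r ≠ i ∧ (∃ n, T.parent^[n] j = r) ∧ ∃ m, T.parent^[m] r = i := by
  simp [delta]

/-- Depth of a node: minimal number of parent-steps to reach the root. -/
noncomputable def dep (i : S) : ℕ := Nat.find (T.reaches_root i)

lemma dep_spec (i : S) : T.parent^[T.dep i] i = T.root := Nat.find_spec (T.reaches_root i)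

lemma dep_parent {i : S} (hi : i ≠ T.root) : T.dep i = T.dep (T.parent i) + 1 := by
  have h1 : T.parent^[T.dep (T.parent i) + 1] i = T.root := by
    rw [Function.iterate_succ_apply]; exact T.dep_spec (T.parent i)
  have le1 : T.dep i ≤ T.dep (T.parent i) + 1 := Nat.find_min' (T.reaches_root i) h1
  have hpos : 0 < T.dep i := by
    rcases Nat.eq_zero_or_pos (T.dep i) with h | h
    · exact absurd (by simpa [h] using T.dep_spec i) hi
    · exact h
  obtain ⟨m, hm⟩ : ∃ m, T.dep i = m + 1 := ⟨T.dep i - 1, by omega⟩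
  have h2 : T.parent^[m] (T.parent i) = T.root := by
    have hs := T.dep_spec i
    rw [hm, Function.iterate_succ_apply] at hs
    exact hs
  have le2 : T.dep (T.parent i) ≤ m := Nat.find_min' (T.reaches_root (T.parent i)) h2
  omega

lemma dep_of_iterate : ∀ {n : ℕ} {j i : S}, T.parent^[n] j = i → i ≠ T.root →
    T.dep i + n = T.dep j := by
  intro n
  induction n with
  | zero => intro j i hj _; simp at hj; subst hj; rfl
  | succ n ih =>
    intro j i hj hi
    have hjr : j ≠ T.root := by
      rintro rfl
      exact hi (by rw [← hj, T.iterate_root])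
    rw [Function.iterate_succ_apply] at hj
    have := ih hj hi
    rw [T.dep_parent hjr]
    omega

lemma eq_root_of_cycle {n : ℕ} {i : S} (h : T.parent^[n + 1] i = i) : i = T.root := by
  by_contra hi
  have := T.dep_of_iterate h hi
  omega

lemma delta_self (i : S) : T.delta i i = ∅ := by
  ext r
  simp only [T.mem_delta', Finset.notMem_empty, iff_false]
  rintro ⟨hne, ⟨n, hn⟩, ⟨m, hm⟩⟩
  rcases n with _ | n'
  · exact hne (by simpa using hn.symm)
  · have hcyc : T.parent^[(m + n') + 1] i = i := by
      have h' : T.parent^[m + (n' + 1)] i = i := by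
        rw [Function.iterate_add_apply, hn, hm]
      rw [Nat.add_succ] at h'
      exact h'
    have hroot : i = T.root := T.eq_root_of_cycle hcyc
    subst hroot
    exact hne (by rw [← hn, T.iterate_root])

lemma subtree_root : T.subtree T.root = Finset.univ := by
  ext j
  simp only [T.mem_subtree', Finset.mem_univ, iff_true]
  exact T.reaches_root j

lemma parent_notMem_subtree {i : S} (hi : i ≠ T.root) : T.parent i ∉ T.subtree i := by
  rw [T.mem_subtree']
  rintro ⟨n, hn⟩
  have hcyc : T.parent^[n + 1] i = i := by
    rw [Function.iterate_succ_apply]; exact hn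
  exact hi (T.eq_root_of_cycle hcyc)

lemma notMem_delta_parent {i j : S} (hne : j ≠ i) (hj : ∃ n, T.parent^[n] j = i) :
    j ∉ T.delta i (T.parent j) := by
  rw [T.mem_delta']
  rintro ⟨_, ⟨m, hm⟩, _⟩
  have hcyc : T.parent^[m + 1] j = j := by
    rw [Function.iterate_succ_apply]; exact hm
  have hjr : j = T.root := T.eq_root_of_cycle hcyc
  subst hjr
  obtain ⟨n, hn⟩ := hj
  exact hne (by rw [← hn, T.iterate_root])

lemma delta_eq_insert {i j : S} (hne : j ≠ i) (hj : ∃ n, T.parent^[n] j = i) :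
    T.delta i j = insert j (T.delta i (T.parent j)) := by
  ext r
  simp only [T.mem_delta', Finset.mem_insert]
  constructor
  · rintro ⟨hri, ⟨n, hn⟩, hm⟩
    rcases n with _ | n'
    · left; simpa using hn.symm
    · right
      rw [Function.iterate_succ_apply] at hn
      exact ⟨hri, ⟨n', hn⟩, hm⟩
  · rintro (rfl | ⟨hri, ⟨n, hn⟩, hm⟩)
    · exact ⟨hne, ⟨0, rfl⟩, hj⟩
    · exact ⟨hri, ⟨n + 1, by rw [Function.iterate_succ_apply]; exact hn⟩, hm⟩

end SFTree

open SFTree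

lemma telescope (T : SFTree S) (h : S → ℝ) (y : S → ℝ)
    (hy : ∀ i, i ≠ T.root → y i = h i - h (T.parent i)) :
    ∀ (n : ℕ) (i j : S), T.parent^[n] j = i → h j - h i = ∑ r ∈ T.delta i j, y r := by
  intro n
  induction n with
  | zero =>
    intro i j hj
    simp only [Function.iterate_zero_apply] at hj
    subst hj
    rw [T.delta_self]
    simp
  | succ n ih =>
    intro i j hj
    by_cases hji : j = i
    · subst hji
      rw [T.delta_self]; simp
    · have hjr : j ≠ T.root := by
        rintro rfl
        have hir : i = T.root := by rw [← hj, T.iterate_root]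
        exact hji hir.symm
      have hpar : T.parent^[n] (T.parent j) = i := by
        rw [← Function.iterate_succ_apply]; exact hj
      rw [T.delta_eq_insert hji ⟨n + 1, hj⟩,
        Finset.sum_insert (T.notMem_delta_parent hji ⟨n + 1, hj⟩),
        ← ih i (T.parent j) hpar, hy j hjr]
      ring

open Classical in
lemma sum_sum_ite (s : Finset S) (t : S → Finset S) (f : S → S → ℝ) :
    ∑ j ∈ s, ∑ r ∈ t j, f j r
      = ∑ j : S, ∑ r : S, if j ∈ s ∧ r ∈ t j then f j r else 0 := by
  symm
  calc ∑ j : S, ∑ r : S, (if j ∈ s ∧ r ∈ t j then f j r else 0)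
      = ∑ j : S, (if j ∈ s then ∑ r : S, (if r ∈ t j then f j r else 0) else 0) := by
        refine Finset.sum_congr rfl fun j _ => ?_
        by_cases hj : j ∈ s
        · simp [hj]
        · simp [hj]
    _ = ∑ j ∈ s, ∑ r : S, (if r ∈ t j then f j r else 0) := by
        rw [Finset.sum_ite_mem, Finset.univ_inter]
    _ = ∑ j ∈ s, ∑ r ∈ t j, f j r := by
        refine Finset.sum_congr rfl fun j _ => ?_
        rw [Finset.sum_ite_mem, Finset.univ_inter]

lemma ciInf_char {A : Type*} [Fintype A] [Nonempty A] (f : A → ℝ) (c : ℝ) :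
    c = ⨅ a, f a ↔ (∀ a, c ≤ f a) ∧ ∃ a, f a ≤ c := by
  have hbdd : BddBelow (Set.range f) := (Set.finite_range f).bddBelow
  constructor
  · rintro rfl
    refine ⟨fun a => ciInf_le hbdd a, ?_⟩
    obtain ⟨a, _, ha⟩ := Finset.exists_min_image Finset.univ f ⟨Classical.arbitrary A,
      Finset.mem_univ _⟩
    exact ⟨a, le_ciInf fun b => ha b (Finset.mem_univ b)⟩
  · rintro ⟨h1, a, h2⟩
    exact le_antisymm (le_ciInf h1) ((ciInf_le hbdd a).trans h2)

lemma pos_mul_nonneg_iff {p u : ℝ} (hp : 0 < p) : 0 ≤ p * u ↔ 0 ≤ u := by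
  constructor
  · intro h
    by_contra hu
    push_neg at hu
    nlinarith
  · intro h
    exact mul_nonneg hp.le h

lemma pos_mul_nonpos_iff {p u : ℝ} (hp : 0 < p) : p * u ≤ 0 ↔ u ≤ 0 := by
  constructor
  · intro h
    by_contra hu
    push_neg at hu
    nlinarith
  · intro h
    exact mul_nonpos_of_nonneg_of_nonpos hp.le h

variable {A : Type*} [Fintype A] (T : SFTree S) (M : MDP S A)

lemma swap_sum (h y : S → ℝ) (hy : ∀ i, i ≠ T.root → y i = h i - h (T.parent i))
    (i : S) (a : A) :
    ∑ j ∈ T.subtree i, M.p i a j * (h j - h i)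
      = ∑ k ∈ T.desc i, M.ptail T i a k * y k := by
  have key : ∀ j r : S, (j ∈ T.subtree i ∧ r ∈ T.delta i j)
      ↔ (r ∈ T.desc i ∧ j ∈ T.subtree r) := by
    intro j r
    simp only [T.mem_subtree', T.mem_desc', T.mem_delta']
    constructor
    · rintro ⟨_, hri, hn, hm⟩
      exact ⟨⟨hri, hm⟩, hn⟩
    · rintro ⟨⟨hri, ⟨m, hm⟩⟩, ⟨n, hn⟩⟩
      exact ⟨⟨m + n, by rw [Function.iterate_add_apply, hn, hm]⟩, hri, ⟨n, hn⟩, ⟨m, hm⟩⟩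
  calc ∑ j ∈ T.subtree i, M.p i a j * (h j - h i)
      = ∑ j ∈ T.subtree i, ∑ r ∈ T.delta i j, M.p i a j * y r := by
        refine Finset.sum_congr rfl fun j hj => ?_
        rw [T.mem_subtree'] at hj
        obtain ⟨n, hn⟩ := hj
        rw [telescope T h y hy n i j hn, Finset.mul_sum]
    _ = ∑ j : S, ∑ r : S,
          if j ∈ T.subtree i ∧ r ∈ T.delta i j then M.p i a j * y r else 0 :=
        sum_sum_ite _ _ _
    _ = ∑ r : S, ∑ j : S,
          if j ∈ T.subtree i ∧ r ∈ T.delta i j then M.p i a j * y r else 0 :=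
        Finset.sum_comm
    _ = ∑ r : S, ∑ j : S,
          if r ∈ T.desc i ∧ j ∈ T.subtree r then M.p i a j * y r else 0 := by
        refine Finset.sum_congr rfl fun r _ => Finset.sum_congr rfl fun j _ => ?_
        exact if_congr (key j r) rfl rfl
    _ = ∑ r ∈ T.desc i, ∑ j ∈ T.subtree r, M.p i a j * y r :=
        (sum_sum_ite (T.desc i) (fun r => T.subtree r)
          (fun r j => M.p i a j * y r)).symm
    _ = ∑ k ∈ T.desc i, M.ptail T i a k * y k := by
        refine Finset.sum_congr rfl fun k _ => ?_
        rw [MDP.ptail, Finset.sum_mul]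

lemma root_identity (g : ℝ) (h y : S → ℝ) (h0 : h T.root = 0)
    (hy : ∀ i, i ≠ T.root → y i = h i - h (T.parent i)) (a : A) :
    M.c T.root a - g + ∑ j, M.p T.root a j * h j
      = M.c T.root a - g + ∑ k ∈ T.desc T.root, M.ptail T T.root a k * y k := by
  congr 1
  rw [← swap_sum T M h y hy T.root a, T.subtree_root, h0]
  simp

lemma nonroot_identity (g : ℝ) (h y : S → ℝ)
    (hy : ∀ i, i ≠ T.root → y i = h i - h (T.parent i)) (hsf : M.IsSkipFree T)
    {i : S} (hi : i ≠ T.root) (a : A) (hp : 0 < M.p i a (T.parent i)) :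
    M.c i a - g + ∑ j, M.p i a j * h j
      = h i + M.p i a (T.parent i)
          * ((M.c i a - g + ∑ k ∈ T.desc i, M.ptail T i a k * y k)
              / M.p i a (T.parent i) - y i) := by
  have hne' : M.p i a (T.parent i) ≠ 0 := hp.ne'
  have hsum : ∑ j, M.p i a j * (h j - h i) = (∑ j, M.p i a j * h j) - h i := by
    simp only [mul_sub, Finset.sum_sub_distrib]
    rw [← Finset.sum_mul, M.p_sum_one i a, one_mul]
  have hsplit : ∑ j ∈ insert (T.parent i) (T.subtree i), M.p i a j * (h j - h i)
      = ∑ j, M.p i a j * (h j - h i) := by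
    refine Finset.sum_subset (Finset.subset_univ _) fun j _ hj => ?_
    rcases eq_or_ne (M.p i a j) 0 with h' | h'
    · rw [h', zero_mul]
    · exfalso
      rcases hsf i hi a j h' with h'' | h''
      · exact hj (h'' ▸ Finset.mem_insert_self _ _)
      · exact hj (Finset.mem_insert_of_mem h'')
  have e1 : (∑ j, M.p i a j * h j) - h i
      = M.p i a (T.parent i) * (h (T.parent i) - h i)
        + ∑ k ∈ T.desc i, M.ptail T i a k * y k := by
    rw [← hsum, ← hsplit, Finset.sum_insert (T.parent_notMem_subtree hi),
      swap_sum T M h y hy i a]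
  have e2 : h (T.parent i) - h i = -(y i) := by
    rw [hy i hi]; ring
  have e3 : M.p i a (T.parent i)
      * ((M.c i a - g + ∑ k ∈ T.desc i, M.ptail T i a k * y k)
          / M.p i a (T.parent i) - y i)
      = (M.c i a - g + ∑ k ∈ T.desc i, M.ptail T i a k * y k)
        - M.p i a (T.parent i) * y i := by
    rw [mul_sub, mul_div_cancel₀ _ hne']
  rw [e3]
  have e4 : (∑ j, M.p i a j * h j)
      = h i + M.p i a (T.parent i) * (-(y i)) + ∑ k ∈ T.desc i, M.ptail T i a k * y k := by
    rw [← e2]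
    linarith [e1]
  rw [e4]
  ring

end Aux

/-- for a finite recurrent skip-free MDP on a tree, with `h root = 0` and
`y i = h i - h (parent i)` for `i ≠ root`, the pair `(g, h)` satisfies the average cost
optimality equations iff `(g, y)` satisfies the skip-free optimality equations; moreover,
given the ACOE hold, an action attains the minimum in the ACOE at `i` iff it attains the
minimum in the corresponding skip-free equation at `i`. -/
theorem stmt2 {S A : Type*} [Fintype S] [DecidableEq S] [Fintype A] [Nonempty A]
    (T : SFTree S) (M : MDP S A)
    (hsf : M.IsSkipFree T) (hrec : IsRecurrentModel M)
    (h00 : ∀ a : A, M.p T.root a T.root < 1)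
    (hpar : ∀ i, i ≠ T.root → ∀ a : A, 0 < M.p i a (T.parent i))
    (g : ℝ) (h : S → ℝ) (h0 : h T.root = 0)
    (y : S → ℝ) (hy : ∀ i, i ≠ T.root → y i = h i - h (T.parent i)) :
    ((∀ i, h i = ⨅ a : A, (M.c i a - g + ∑ j, M.p i a j * h j))
      ↔ ((∀ i, i ≠ T.root →
            y i = ⨅ a : A, (M.c i a - g + ∑ k ∈ T.desc i, M.ptail T i a k * y k)
                / M.p i a (T.parent i))
          ∧ 0 = ⨅ a : A, (M.c T.root a - g
                + ∑ k ∈ T.desc T.root, M.ptail T T.root a k * y k)))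
    ∧ ((∀ i, h i = ⨅ a : A, (M.c i a - g + ∑ j, M.p i a j * h j)) →
        ∀ i (a : A),
          (M.c i a - g + ∑ j, M.p i a j * h j = h i)
            ↔ (if i = T.root
                then M.c T.root a - g + ∑ k ∈ T.desc T.root, M.ptail T T.root a k * y k = 0
                else (M.c i a - g + ∑ k ∈ T.desc i, M.ptail T i a k * y k)
                    / M.p i a (T.parent i) = y i)) := by
  have nonroot_iff : ∀ i, i ≠ T.root →
      ((h i = ⨅ a : A, (M.c i a - g + ∑ j, M.p i a j * h j)) ↔
        (y i = ⨅ a : A, (M.c i a - g + ∑ k ∈ T.desc i, M.ptail T i a k * y k)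
            / M.p i a (T.parent i))) := by
    intro i hi
    rw [ciInf_char, ciInf_char]
    have key : ∀ a : A, M.c i a - g + ∑ j, M.p i a j * h j
        = h i + M.p i a (T.parent i)
            * ((M.c i a - g + ∑ k ∈ T.desc i, M.ptail T i a k * y k)
                / M.p i a (T.parent i) - y i) :=
      fun a => nonroot_identity T M g h y hy hsf hi a (hpar i hi a)
    constructor
    · rintro ⟨h1, a, h2⟩
      refine ⟨fun a' => ?_, a, ?_⟩
      · have hh := h1 a'
        rw [key a'] at hh
        have h3 : 0 ≤ M.p i a' (T.parent i)
            * ((M.c i a' - g + ∑ k ∈ T.desc i, M.ptail T i a' k * y k)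
                / M.p i a' (T.parent i) - y i) := by linarith
        have h4 := (pos_mul_nonneg_iff (hpar i hi a')).mp h3
        linarith
      · have hh := h2
        rw [key a] at hh
        have h3 : M.p i a (T.parent i)
            * ((M.c i a - g + ∑ k ∈ T.desc i, M.ptail T i a k * y k)
                / M.p i a (T.parent i) - y i) ≤ 0 := by linarith
        have h4 := (pos_mul_nonpos_iff (hpar i hi a)).mp h3
        linarith
    · rintro ⟨h1, a, h2⟩
      refine ⟨fun a' => ?_, a, ?_⟩
      · rw [key a']
        have h4 : 0 ≤ (M.c i a' - g + ∑ k ∈ T.desc i, M.ptail T i a' k * y k)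
            / M.p i a' (T.parent i) - y i := by linarith [h1 a']
        have h3 := (pos_mul_nonneg_iff (hpar i hi a')).mpr h4
        linarith
      · rw [key a]
        have h4 : (M.c i a - g + ∑ k ∈ T.desc i, M.ptail T i a k * y k)
            / M.p i a (T.parent i) - y i ≤ 0 := by linarith
        have h3 := (pos_mul_nonpos_iff (hpar i hi a)).mpr h4
        linarith
  have root_iff : (h T.root = ⨅ a : A, (M.c T.root a - g + ∑ j, M.p T.root a j * h j)) ↔
      (0 = ⨅ a : A, (M.c T.root a - g
        + ∑ k ∈ T.desc T.root, M.ptail T T.root a k * y k)) := by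
    rw [h0, iInf_congr (fun a => root_identity T M g h y h0 hy a)]
  constructor
  · constructor
    · intro hACOE
      exact ⟨fun i hi => (nonroot_iff i hi).mp (hACOE i), root_iff.mp (hACOE T.root)⟩
    · rintro ⟨h1, h2⟩ i
      by_cases hi : i = T.root
      · subst hi
        exact root_iff.mpr h2
      · exact (nonroot_iff i hi).mpr (h1 i hi)
  · intro _ i a
    by_cases hi : i = T.root
    · subst hi
      rw [if_pos rfl, root_identity T M g h y h0 hy a, h0]
    · rw [if_neg hi, nonroot_identity T M g h y hy hsf hi a (hpar i hi a)]
      have hne' : M.p i a (T.parent i) ≠ 0 := (hpar i hi a).ne'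
      constructor
      · intro heq
        have h3 : M.p i a (T.parent i)
            * ((M.c i a - g + ∑ k ∈ T.desc i, M.ptail T i a k * y k)
                / M.p i a (T.parent i) - y i) = 0 := by linarith
        rcases mul_eq_zero.mp h3 with h4 | h4
        · exact absurd h4 hne'
        · linarith [sub_eq_zero.mp h4]
      · intro heq
        rw [heq]
        ring
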